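/- (Estimate iii.) With the same hypotheses and assuming additionally $I_{z,k} > 0$ for all $k$, define $L_{z,k} = \langle X_k, Q_k\rangle - \langle Y_k, P_k\rangle$. Then $|\sqrt{K_{z,k}} - L_{z,k}/\sqrt{I_{z,k}}| \to 0$ as $k \to \infty$. -/
import Mathlib


open Filter
open scoped Topology RealInnerProductSpace

/-- Estimate iii (Lemma 5.5 iii): along a critical sequence in multiplier
coordinates, if moreover `I_{z,k} > 0` for all `k`, then with
`L_z = ⟨X,Q⟩ - ⟨Y,P⟩` one has `|√K_{z,k} - L_{z,k}/√I_{z,k}| → 0`. -/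
theorem critical_sequence_estimate_iii
    {E : Type*} [NormedAddCommGroup E] [InnerProductSpace ℝ E]
    (X Y Z P Q R : ℕ → E) (lam : ℕ → ℝ) (hlam : ∀ k, 0 ≤ lam k)
    (herr : Tendsto
      (fun k => ‖P k + lam k • Y k‖ + ‖Q k - lam k • X k‖ + ‖R k‖) atTop (𝓝 0))
    (hIz : ∀ k, 0 < ‖X k‖ ^ 2 + ‖Y k‖ ^ 2) :
    Tendsto (fun k =>
        |Real.sqrt (‖P k‖ ^ 2 + ‖Q k‖ ^ 2) -
          (⟪X k, Q k⟫ - ⟪Y k, P k⟫) / Real.sqrt (‖X k‖ ^ 2 + ‖Y k‖ ^ 2)|)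
      atTop (𝓝 0) := by
  have key : ∀ k, |Real.sqrt (‖P k‖ ^ 2 + ‖Q k‖ ^ 2) -
          (⟪X k, Q k⟫ - ⟪Y k, P k⟫) / Real.sqrt (‖X k‖ ^ 2 + ‖Y k‖ ^ 2)| ≤
      2 * (‖P k + lam k • Y k‖ + ‖Q k - lam k • X k‖ + ‖R k‖) := by
    intro k
    set a := ‖P k + lam k • Y k‖ with ha
    set b := ‖Q k - lam k • X k‖ with hb
    have h0a : (0:ℝ) ≤ a := norm_nonneg _
    have h0b : (0:ℝ) ≤ b := norm_nonneg _
    have h0r : (0:ℝ) ≤ ‖R k‖ := norm_nonneg _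
    have hIpos : (0:ℝ) < ‖X k‖ ^ 2 + ‖Y k‖ ^ 2 := hIz k
    have hsI : 0 < Real.sqrt (‖X k‖ ^ 2 + ‖Y k‖ ^ 2) := Real.sqrt_pos.2 hIpos
    set u : WithLp 2 (E × E) := (WithLp.equiv 2 (E × E)).symm (P k, Q k) with hu
    set v : WithLp 2 (E × E) :=
      (WithLp.equiv 2 (E × E)).symm (-(lam k • Y k), lam k • X k) with hv
    set w : WithLp 2 (E × E) := (WithLp.equiv 2 (E × E)).symm (X k, Y k) with hw
    set u' : WithLp 2 (E × E) := (WithLp.equiv 2 (E × E)).symm (Q k, -(P k)) with hu'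
    have hufst : u.fst = P k := rfl
    have husnd : u.snd = Q k := rfl
    have hnormu : ‖u‖ = Real.sqrt (‖P k‖ ^ 2 + ‖Q k‖ ^ 2) := by
      rw [WithLp.prod_norm_eq_of_L2]; rfl
    have hnormw : ‖w‖ = Real.sqrt (‖X k‖ ^ 2 + ‖Y k‖ ^ 2) := by
      rw [WithLp.prod_norm_eq_of_L2]; rfl
    have hnormv : ‖v‖ = lam k * Real.sqrt (‖X k‖ ^ 2 + ‖Y k‖ ^ 2) := by
      rw [WithLp.prod_norm_eq_of_L2]
      show Real.sqrt (‖-(lam k • Y k)‖ ^ 2 + ‖lam k • X k‖ ^ 2) = _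
      rw [norm_neg, norm_smul, norm_smul]
      rw [show (‖lam k‖ * ‖Y k‖) ^ 2 + (‖lam k‖ * ‖X k‖) ^ 2
          = (lam k) ^ 2 * (‖X k‖ ^ 2 + ‖Y k‖ ^ 2) by
        rw [Real.norm_eq_abs, mul_pow, mul_pow, sq_abs]; ring]
      rw [Real.sqrt_mul (sq_nonneg _), Real.sqrt_sq (hlam k)]
    have huv : ‖u - v‖ ≤ a + b := by
      have hfst : (u - v).fst = P k + lam k • Y k := by
        show P k - -(lam k • Y k) = _; rw [sub_neg_eq_add]
      have hsnd : (u - v).snd = Q k - lam k • X k := rfl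
      rw [WithLp.prod_norm_eq_of_L2, hfst, hsnd, ← ha, ← hb]
      calc Real.sqrt (a ^ 2 + b ^ 2) ≤ Real.sqrt ((a + b) ^ 2) := by
            apply Real.sqrt_le_sqrt; nlinarith
        _ = a + b := Real.sqrt_sq (by positivity)
    have huw' : ‖u' - lam k • w‖ ≤ a + b := by
      have hfst : (u' - lam k • w).fst = Q k - lam k • X k := rfl
      have hsnd : (u' - lam k • w).snd = -(P k + lam k • Y k) := by
        show -(P k) - lam k • Y k = _; abel
      rw [WithLp.prod_norm_eq_of_L2, hfst, hsnd, norm_neg, ← ha, ← hb]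
      calc Real.sqrt (b ^ 2 + a ^ 2) ≤ Real.sqrt ((a + b) ^ 2) := by
            apply Real.sqrt_le_sqrt; nlinarith
        _ = a + b := Real.sqrt_sq (by positivity)
    -- Step A
    have stepA : |Real.sqrt (‖P k‖ ^ 2 + ‖Q k‖ ^ 2)
        - lam k * Real.sqrt (‖X k‖ ^ 2 + ‖Y k‖ ^ 2)| ≤ a + b := by
      rw [← hnormu, ← hnormv]
      exact le_trans (abs_norm_sub_norm_le u v) huv
    -- Step B
    have hinner : ⟪w, u'⟫ = ⟪X k, Q k⟫ + ⟪Y k, -(P k)⟫ := by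
      rw [WithLp.prod_inner_apply]; rfl
    have hL : ⟪w, u'⟫ = ⟪X k, Q k⟫ - ⟪Y k, P k⟫ := by
      rw [hinner, inner_neg_right]; ring
    have hww : ⟪w, lam k • w⟫ = lam k * (‖X k‖ ^ 2 + ‖Y k‖ ^ 2) := by
      rw [real_inner_smul_right, real_inner_self_eq_norm_sq, hnormw,
        Real.sq_sqrt hIpos.le]
    have stepB0 : |(⟪X k, Q k⟫ - ⟪Y k, P k⟫) - lam k * (‖X k‖ ^ 2 + ‖Y k‖ ^ 2)|
        ≤ Real.sqrt (‖X k‖ ^ 2 + ‖Y k‖ ^ 2) * (a + b) := by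
      rw [← hL, ← hww, ← inner_sub_right]
      calc |⟪w, u' - lam k • w⟫| ≤ ‖w‖ * ‖u' - lam k • w‖ := abs_real_inner_le_norm _ _
        _ ≤ Real.sqrt (‖X k‖ ^ 2 + ‖Y k‖ ^ 2) * (a + b) := by
            rw [hnormw]; exact mul_le_mul_of_nonneg_left huw' hsI.le
    have stepB : |(⟪X k, Q k⟫ - ⟪Y k, P k⟫) / Real.sqrt (‖X k‖ ^ 2 + ‖Y k‖ ^ 2)
        - lam k * Real.sqrt (‖X k‖ ^ 2 + ‖Y k‖ ^ 2)| ≤ a + b := by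
      have hdiv : (⟪X k, Q k⟫ - ⟪Y k, P k⟫) / Real.sqrt (‖X k‖ ^ 2 + ‖Y k‖ ^ 2)
          - lam k * Real.sqrt (‖X k‖ ^ 2 + ‖Y k‖ ^ 2)
          = ((⟪X k, Q k⟫ - ⟪Y k, P k⟫) - lam k * (‖X k‖ ^ 2 + ‖Y k‖ ^ 2))
            / Real.sqrt (‖X k‖ ^ 2 + ‖Y k‖ ^ 2) := by
        rw [eq_div_iff hsI.ne', sub_mul, div_mul_cancel₀ _ hsI.ne', mul_assoc,
          Real.mul_self_sqrt hIpos.le]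
      rw [hdiv, abs_div, abs_of_pos hsI, div_le_iff₀ hsI]
      calc |(⟪X k, Q k⟫ - ⟪Y k, P k⟫) - lam k * (‖X k‖ ^ 2 + ‖Y k‖ ^ 2)|
          ≤ Real.sqrt (‖X k‖ ^ 2 + ‖Y k‖ ^ 2) * (a + b) := stepB0
        _ = (a + b) * Real.sqrt (‖X k‖ ^ 2 + ‖Y k‖ ^ 2) := by ring
    calc |Real.sqrt (‖P k‖ ^ 2 + ‖Q k‖ ^ 2) -
          (⟪X k, Q k⟫ - ⟪Y k, P k⟫) / Real.sqrt (‖X k‖ ^ 2 + ‖Y k‖ ^ 2)|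
        ≤ |Real.sqrt (‖P k‖ ^ 2 + ‖Q k‖ ^ 2)
            - lam k * Real.sqrt (‖X k‖ ^ 2 + ‖Y k‖ ^ 2)|
          + |(⟪X k, Q k⟫ - ⟪Y k, P k⟫) / Real.sqrt (‖X k‖ ^ 2 + ‖Y k‖ ^ 2)
            - lam k * Real.sqrt (‖X k‖ ^ 2 + ‖Y k‖ ^ 2)| := by
          rw [abs_sub_comm ((⟪X k, Q k⟫ - ⟪Y k, P k⟫) / _) _]
          exact abs_sub_le _ _ _
      _ ≤ (a + b) + (a + b) := add_le_add stepA stepB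
      _ ≤ 2 * (a + b + ‖R k‖) := by linarith
  have h2 : Tendsto (fun k => 2 * (‖P k + lam k • Y k‖ + ‖Q k - lam k • X k‖ + ‖R k‖))
      atTop (𝓝 0) := by
    simpa using herr.const_mul 2
  exact squeeze_zero (fun k => abs_nonneg _) key h2
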